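/- Under assumptions (I)–(III), the (m+sd)×(m+sd) matrix A₀·diag{0_{m×m}, −I_{sd}} equals diag{0_{m×m}, −B}, where A₀ := diag{a₀, B} and B := (I_d ⊗ a₀²²)·H⁻¹, and this matrix is symmetric negative semidefinite. -/

import Mathlib

/-!
The blocks `a₀²² D_{jk}²²` of (II) form a positive semidefinite principal submatrix
`G = (I_d ⊗ a₀²²) H`. As `a₀²²` and `G` are symmetric, `Hᵀ (I_d ⊗ a₀²²) = G`, so
`B = (I_d ⊗ a₀²²) H⁻¹ = H⁻ᵀ G H⁻¹` is congruent to `G`, hence positive semidefinite.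
-/

open Matrix

namespace Matrix

variable {n ι σ α β R : Type*} [Fintype n] [DecidableEq n]

lemma PosSemidef.mul_nonsing_inv_of_isHermitian [CommRing R] [StarRing R] [PartialOrder R]
    [StarOrderedRing R] {K H : Matrix n n R} (hK : K.IsHermitian) (hKH : (K * H).PosSemidef)
    (hH : IsUnit H.det) : (K * H⁻¹).PosSemidef := by
  have hHK : Hᴴ * K = K * H := by
    rw [← hKH.isHermitian.eq, conjTranspose_mul, hK.eq]
  have hcongr : K * H⁻¹ = H⁻¹ᴴ * (K * H) * H⁻¹ := by
    rw [← hHK, ← Matrix.mul_assoc, ← conjTranspose_mul, mul_nonsing_inv H hH, conjTranspose_one,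
      Matrix.one_mul]
  rw [hcongr]
  exact hKH.conjTranspose_mul_mul_same H⁻¹

lemma PosSemidef.fromBlocks_zero [Fintype α] [Fintype β] [DecidableEq β] [CommRing R]
    [StarRing R] [PartialOrder R] [StarOrderedRing R] {B : Matrix β β R} (hB : B.PosSemidef) :
    (fromBlocks (0 : Matrix α α R) 0 0 B).PosSemidef := by
  have h := hB.conjTranspose_mul_mul_same (fromCols (0 : Matrix β α R) (1 : Matrix β β R))
  rwa [conjTranspose_fromCols_eq_fromRows_conjTranspose, fromRows_mul, fromRows_mul_fromCols,
    conjTranspose_zero, conjTranspose_one, Matrix.zero_mul, Matrix.zero_mul, Matrix.one_mul,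
    Matrix.zero_mul, Matrix.mul_zero, Matrix.mul_one] at h

lemma one_kronecker_mul_of_blocks [Fintype ι] [DecidableEq ι] [Fintype σ] [CommSemiring R]
    (A : Matrix σ σ R) (M : ι → ι → Matrix σ σ R) :
    kroneckerMap (· * ·) (1 : Matrix ι ι R) A * of (fun x y => M x.1 y.1 x.2 y.2) =
      of fun x y => (A * M x.1 y.1) x.2 y.2 := by
  ext ⟨j, i⟩ ⟨k, l⟩
  simp [mul_apply, Fintype.sum_prod_type, one_apply, ite_mul, Finset.sum_ite_eq]

end Matrix

theorem stmt_2_general (p s d : ℕ)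
    (a11 : Matrix (Fin p) (Fin p) ℝ) (a12 : Matrix (Fin p) (Fin s) ℝ)
    (a21 : Matrix (Fin s) (Fin p) ℝ) (a22 : Matrix (Fin s) (Fin s) ℝ)
    (D21 : Fin d → Fin d → Matrix (Fin s) (Fin p) ℝ)
    (D22 : Fin d → Fin d → Matrix (Fin s) (Fin s) ℝ)
    (a₀ : Matrix (Fin p ⊕ Fin s) (Fin p ⊕ Fin s) ℝ)
    (ha₀ : a₀ = fromBlocks a11 a12 a21 a22)
    (D : Fin d → Fin d → Matrix (Fin p ⊕ Fin s) (Fin p ⊕ Fin s) ℝ)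
    (hD : ∀ j k, D j k = fromBlocks 0 0 (D21 j k) (D22 j k))
    (hpd : a₀.PosDef)
    -- (II): the md × md block matrix with (j,k) block a₀ ⬝ D_{jk} is symmetric PSD
    (hII : (Matrix.of fun (x y : Fin d × (Fin p ⊕ Fin s)) =>
      (a₀ * D x.1 y.1) x.2 y.2).PosSemidef)
    -- (III): the sd × sd block matrix H with (j,k) block D_{jk}²² is invertible
    (H : Matrix (Fin d × Fin s) (Fin d × Fin s) ℝ)
    (hH : H = Matrix.of fun (x y : Fin d × Fin s) => D22 x.1 y.1 x.2 y.2)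
    (hIII : IsUnit H.det)
    (B : Matrix (Fin d × Fin s) (Fin d × Fin s) ℝ)
    (hB : B = (kroneckerMap (· * ·) (1 : Matrix (Fin d) (Fin d) ℝ) a22) * H⁻¹)
    (A₀ : Matrix ((Fin p ⊕ Fin s) ⊕ (Fin d × Fin s)) ((Fin p ⊕ Fin s) ⊕ (Fin d × Fin s)) ℝ)
    (hA₀ : A₀ = fromBlocks a₀ 0 0 B) :
    A₀ * fromBlocks 0 0 0 (-1) = fromBlocks 0 0 0 (-B) ∧
      (fromBlocks (0 : Matrix (Fin p ⊕ Fin s) (Fin p ⊕ Fin s) ℝ) 0 0 (-B)).IsSymm ∧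
      (-(fromBlocks (0 : Matrix (Fin p ⊕ Fin s) (Fin p ⊕ Fin s) ℝ) 0 0 (-B))).PosSemidef := by
  have ha22 : a22.IsHermitian := (isHermitian_fromBlocks_iff.1 (ha₀ ▸ hpd.isHermitian)).2.2.2
  have hG : (of fun x y : Fin d × Fin s => (a22 * D22 x.1 y.1) x.2 y.2).PosSemidef := by
    convert hII.submatrix (fun x : Fin d × Fin s => (x.1, Sum.inr x.2)) using 1
    ext x y
    simp [ha₀, hD, fromBlocks_multiply]
  have hBpsd : B.PosSemidef := by
    rw [hB]
    refine PosSemidef.mul_nonsing_inv_of_isHermitian ?_ ?_ hIII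
    · rw [IsHermitian, conjTranspose_kronecker, conjTranspose_one, ha22.eq]
    · rwa [hH, one_kronecker_mul_of_blocks]
  refine ⟨by simp [hA₀, fromBlocks_multiply], ?_, ?_⟩
  · exact .fromBlocks isSymm_zero (by simp) (isHermitian_iff_isSymm.1 hBpsd.isHermitian).neg
  · simpa [fromBlocks_neg] using hBpsd.fromBlocks_zero

/-- Theorem 4.1(c): under assumptions (I)–(III),
`A₀ * diag{0, -I_sd} = diag{0, -B}`, and this matrix is symmetric negative semidefinite. -/
theorem stmt_2 (p s d : ℕ) (hp : 1 ≤ p) (hs : 1 ≤ s) (hd : 1 ≤ d)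
    (a : Fin d → Matrix (Fin p ⊕ Fin s) (Fin p ⊕ Fin s) ℝ)
    (a11 : Matrix (Fin p) (Fin p) ℝ) (a12 : Matrix (Fin p) (Fin s) ℝ)
    (a21 : Matrix (Fin s) (Fin p) ℝ) (a22 : Matrix (Fin s) (Fin s) ℝ)
    (D21 : Fin d → Fin d → Matrix (Fin s) (Fin p) ℝ)
    (D22 : Fin d → Fin d → Matrix (Fin s) (Fin s) ℝ)
    (a₀ : Matrix (Fin p ⊕ Fin s) (Fin p ⊕ Fin s) ℝ)
    (ha₀ : a₀ = fromBlocks a11 a12 a21 a22)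
    (D : Fin d → Fin d → Matrix (Fin p ⊕ Fin s) (Fin p ⊕ Fin s) ℝ)
    (hD : ∀ j k, D j k = fromBlocks 0 0 (D21 j k) (D22 j k))
    (hpd : a₀.PosDef)
    -- (I): a₀ ⬝ a_j is symmetric
    (hI : ∀ j, (a₀ * a j).IsSymm)
    -- (II): the md × md block matrix with (j,k) block a₀ ⬝ D_{jk} is symmetric PSD
    (hII : (Matrix.of fun (x y : Fin d × (Fin p ⊕ Fin s)) =>
      (a₀ * D x.1 y.1) x.2 y.2).PosSemidef)
    -- (III): the sd × sd block matrix H with (j,k) block D_{jk}²² is invertible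
    (H : Matrix (Fin d × Fin s) (Fin d × Fin s) ℝ)
    (hH : H = Matrix.of fun (x y : Fin d × Fin s) => D22 x.1 y.1 x.2 y.2)
    (hIII : IsUnit H.det)
    (B : Matrix (Fin d × Fin s) (Fin d × Fin s) ℝ)
    (hB : B = (kroneckerMap (· * ·) (1 : Matrix (Fin d) (Fin d) ℝ) a22) * H⁻¹)
    (A₀ : Matrix ((Fin p ⊕ Fin s) ⊕ (Fin d × Fin s)) ((Fin p ⊕ Fin s) ⊕ (Fin d × Fin s)) ℝ)
    (hA₀ : A₀ = fromBlocks a₀ 0 0 B) :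
    A₀ * fromBlocks 0 0 0 (-1) = fromBlocks 0 0 0 (-B) ∧
      (fromBlocks (0 : Matrix (Fin p ⊕ Fin s) (Fin p ⊕ Fin s) ℝ) 0 0 (-B)).IsSymm ∧
      (-(fromBlocks (0 : Matrix (Fin p ⊕ Fin s) (Fin p ⊕ Fin s) ℝ) 0 0 (-B))).PosSemidef :=
  stmt_2_general p s d a11 a12 a21 a22 D21 D22 a₀ ha₀ D hD hpd hII H hH hIII B hB A₀ hA₀
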